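/- arXiv:2511.08290 — 7 statements merged into one kernel-verified Lean document; each statement's English description precedes it below -/
import Mathlib

section
/- If char F ≠ 2, then sol(sl₂(F)) = {0}, i.e., for every nonzero x in sl₂(F) there exists y such that the subalgebra generated by x and y is not solvable. -/
/-!
Write `x ∈ sl₂(F)` as `a • h + b • e + c • f` in the standard triple. If `b ≠ 0`, then
`⁅f, x⁆ = 2a • f - b • h` puts `h`, and then `e`, into the subalgebra generated by `f` and `x`;
if `c ≠ 0` the same holds for `e` and `x` by the symmetry `(h, e, f) ↦ (-h, f, e)`; and if
`x = a • h` with `a ≠ 0`, then `⁅x, e + f⁆ = 2a • (e - f)`, so `e + f` and `x` generate. Hence every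
`x ≠ 0` generates all of `sl₂(F)` together with a suitable `y`, and `sl₂(F)` is not solvable because
`2 ≠ 0` makes it perfect: `h = ⁅e, f⁆`, `2 • e = ⁅h, e⁆`, `2 • f = ⁅f, h⁆`.
-/

/-- The solvabilizer of `x` in `L`: elements `y` such that the Lie subalgebra
generated by `x` and `y` is solvable. -/
def solvabilizer (R : Type*) {L : Type*} [CommRing R] [LieRing L] [LieAlgebra R L]
    (x : L) : Set L :=
  {y | LieAlgebra.IsSolvable (LieSubalgebra.lieSpan R L {x, y})}

/-- The solvabilizer of `L`: elements `x` such that for every `h ∈ L` the Lie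
subalgebra generated by `h` and `x` is solvable. -/
def solSet (R L : Type*) [CommRing R] [LieRing L] [LieAlgebra R L] : Set L :=
  {x | ∀ h : L, LieAlgebra.IsSolvable (LieSubalgebra.lieSpan R L {h, x})}

open LieAlgebra LieSubalgebra Submodule

theorem LieSubalgebra.isSolvable_lieSpan_pair_zero {R L : Type*} [CommRing R] [LieRing L]
    [LieAlgebra R L] (x : L) : IsSolvable (lieSpan R L {x, 0}) := by
  have : IsLieAbelian (lieSpan R L {x, 0}) := by simp
  infer_instance

theorem LieAlgebra.not_isSolvable_of_derivedSeries_one_eq_top {R L : Type*} [CommRing R]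
    [LieRing L] [LieAlgebra R L] [Nontrivial L] (h : derivedSeries R L 1 = ⊤) :
    ¬ IsSolvable L :=
  fun _ ↦ (derivedSeries_lt_top_of_solvable R L).ne h

namespace IsSl2Triple

variable {K L : Type*} [Field K] [LieRing L] [LieAlgebra K L] {h e f : L}

theorem span_le_derivedSeries_one (t : IsSl2Triple h e f) (h2 : (2 : K) ≠ 0) :
    span K {h, e, f} ≤ (derivedSeries K L 1 : Submodule K L) := by
  have hmem : ∀ x y : L, ⁅x, y⁆ ∈ (derivedSeries K L 1 : Submodule K L) := fun x y ↦ by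
    rw [coe_derivedSeries_one_eq]; exact subset_span ⟨x, y, rfl⟩
  have he : (2 : K) • e = ⁅h, e⁆ := (t.lie_h_e_smul K).symm
  have hf : (2 : K) • f = ⁅f, h⁆ := by rw [← lie_skew, t.lie_lie_smul_f K, neg_neg]
  rw [span_le, Set.insert_subset_iff, Set.insert_subset_iff, Set.singleton_subset_iff]
  refine ⟨t.lie_e_f ▸ hmem e f, ?_, ?_⟩
  · exact (smul_mem_iff _ h2).mp (he ▸ hmem h e)
  · exact (smul_mem_iff _ h2).mp (hf ▸ hmem f h)

variable {S : LieSubalgebra K L}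

theorem h_mem (t : IsSl2Triple h e f) (he : e ∈ S) (hf : f ∈ S) : h ∈ S :=
  t.lie_e_f ▸ S.lie_mem he hf

theorem e_mem_of_f_mem (t : IsSl2Triple h e f) {a b c : K} (hb : b ≠ 0) (hf : f ∈ S)
    (hx : a • h + b • e + c • f ∈ S) : e ∈ S := by
  have hbr : ⁅f, a • h + b • e + c • f⁆ = (2 * a) • f - b • h := by
    rw [lie_add, lie_add, lie_smul, lie_smul, lie_smul, ← lie_skew, t.lie_lie_smul_f K,
      ← lie_skew, t.lie_e_f, lie_self]
    module
  have hh : h ∈ S := by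
    refine (S.toSubmodule.smul_mem_iff hb).mp ?_
    have : b • h = (2 * a) • f - ⁅f, a • h + b • e + c • f⁆ := by rw [hbr]; abel
    rw [this]
    exact S.sub_mem (S.smul_mem _ hf) (S.lie_mem hf hx)
  refine (S.toSubmodule.smul_mem_iff hb).mp ?_
  have : b • e = (a • h + b • e + c • f) - a • h - c • f := by abel
  rw [this]
  exact S.sub_mem (S.sub_mem hx (S.smul_mem _ hh)) (S.smul_mem _ hf)

theorem e_mem_of_add_mem (t : IsSl2Triple h e f) (h2 : (2 : K) ≠ 0) (hh : h ∈ S)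
    (hef : e + f ∈ S) : e ∈ S := by
  have hsub : e - f ∈ S := by
    refine (S.toSubmodule.smul_mem_iff h2).mp ?_
    have : (2 : K) • (e - f) = ⁅h, e + f⁆ := by
      rw [lie_add, t.lie_h_e_smul K, t.lie_lie_smul_f K, smul_sub, sub_eq_add_neg]
    rw [this]
    exact S.lie_mem hh hef
  refine (S.toSubmodule.smul_mem_iff h2).mp ?_
  have : (2 : K) • e = (e + f) + (e - f) := by module
  rw [this]
  exact S.add_mem hef hsub

theorem exists_span_le_lieSpan_pair (t : IsSl2Triple h e f) (h2 : (2 : K) ≠ 0) {x : L}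
    (hx : x ∈ span K {h, e, f}) (hx0 : x ≠ 0) :
    ∃ y, span K {h, e, f} ≤ (lieSpan K L {y, x}).toSubmodule := by
  obtain ⟨a, _, hz, rfl⟩ := mem_span_insert.mp hx
  obtain ⟨b, c, rfl⟩ := mem_span_pair.mp hz
  rw [← add_assoc] at hx0 ⊢
  suffices ∃ y, e ∈ lieSpan K L {y, a • h + b • e + c • f} ∧
      f ∈ lieSpan K L {y, a • h + b • e + c • f} by
    obtain ⟨y, he, hf⟩ := this
    refine ⟨y, span_le.mpr ?_⟩
    rw [Set.insert_subset_iff, Set.insert_subset_iff, Set.singleton_subset_iff]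
    exact ⟨t.h_mem he hf, he, hf⟩
  have hyS {y : L} : y ∈ lieSpan K L {y, a • h + b • e + c • f} :=
    subset_lieSpan (Set.mem_insert _ _)
  have hxS {y : L} : a • h + b • e + c • f ∈ lieSpan K L {y, a • h + b • e + c • f} :=
    subset_lieSpan (Set.mem_insert_of_mem _ rfl)
  by_cases hb : b ≠ 0
  · exact ⟨f, t.e_mem_of_f_mem hb hyS hxS, hyS⟩
  by_cases hc : c ≠ 0
  · refine ⟨e, hyS, t.symm.e_mem_of_f_mem (a := -a) (c := b) hc hyS ?_⟩
    convert hxS using 1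
    module
  push Not at hb hc
  subst hb hc
  have ha : a ≠ 0 := by rintro rfl; simp at hx0
  have hh : h ∈ lieSpan K L {e + f, a • h + (0 : K) • e + (0 : K) • f} := by
    refine (toSubmodule _ |>.smul_mem_iff ha).mp ?_
    simpa using hxS
  have he := t.e_mem_of_add_mem h2 hh hyS
  exact ⟨e + f, he, by simpa using sub_mem hyS he⟩

end IsSl2Triple

namespace LieAlgebra.SpecialLinear

variable (K : Type*) [Field K]

def sl2h : sl (Fin 2) K := singleSubSingle 0 1 1
def sl2e : sl (Fin 2) K := single 0 1 zero_ne_one 1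
def sl2f : sl (Fin 2) K := single 1 0 one_ne_zero 1

variable {K}

theorem sl2_ext {x y : sl (Fin 2) K} (h00 : x.val 0 0 = y.val 0 0) (h01 : x.val 0 1 = y.val 0 1)
    (h10 : x.val 1 0 = y.val 1 0) : x = y := by
  have h11 (z : sl (Fin 2) K) : z.val 1 1 = -z.val 0 0 := by
    have : Matrix.trace z.val = 0 := z.2
    rw [Matrix.trace_fin_two] at this
    linear_combination this
  ext i j
  fin_cases i <;> fin_cases j
  · exact h00
  · exact h01
  · exact h10
  · simp only [Fin.mk_one, h11, h00]

variable (K)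

theorem isSl2Triple_sl2 : IsSl2Triple (sl2h K) (sl2e K) (sl2f K) where
  h_ne_zero h0 := by simpa [sl2h] using congrArg (fun z : sl (Fin 2) K ↦ z.val 0 0) h0
  lie_e_f := by apply sl2_ext <;> simp [sl2h, sl2e, sl2f, Ring.lie_def]
  lie_h_e_nsmul := by apply sl2_ext <;> norm_num [sl2h, sl2e, Ring.lie_def, Matrix.mul_apply]
  lie_h_f_nsmul := by apply sl2_ext <;> norm_num [sl2h, sl2f, Ring.lie_def, Matrix.mul_apply]

theorem span_sl2_eq_top : span K {sl2h K, sl2e K, sl2f K} = ⊤ := by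
  refine eq_top_iff.mpr fun x _ ↦ mem_span_insert.mpr ⟨x.val 0 0, _,
    mem_span_pair.mpr ⟨x.val 0 1, x.val 1 0, rfl⟩, ?_⟩
  apply sl2_ext <;> simp [sl2h, sl2e, sl2f]

variable {K}

theorem not_isSolvable_sl2 (h2 : (2 : K) ≠ 0) : ¬ IsSolvable (sl (Fin 2) K) := by
  have := nontrivial_of_ne _ _ (isSl2Triple_sl2 K).h_ne_zero
  refine not_isSolvable_of_derivedSeries_one_eq_top (R := K) ?_
  rw [← LieSubmodule.toSubmodule_eq_top, eq_top_iff, ← span_sl2_eq_top]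
  exact (isSl2Triple_sl2 K).span_le_derivedSeries_one h2

theorem exists_lieSpan_pair_eq_top (h2 : (2 : K) ≠ 0) {x : sl (Fin 2) K} (hx : x ≠ 0) :
    ∃ y, lieSpan K _ {y, x} = ⊤ := by
  obtain ⟨y, hy⟩ := (isSl2Triple_sl2 K).exists_span_le_lieSpan_pair h2
    (by simp [span_sl2_eq_top]) hx
  exact ⟨y, (toSubmodule_eq_top _).mp (top_unique (span_sl2_eq_top K ▸ hy))⟩

end LieAlgebra.SpecialLinear

theorem stmt3 (F : Type*) [Field F] (hchar : ringChar F ≠ 2) :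
    solSet F (LieAlgebra.SpecialLinear.sl (Fin 2) F) = {0} := by
  have h2 : (2 : F) ≠ 0 := Ring.two_ne_zero hchar
  ext x
  refine ⟨fun hx ↦ by_contra fun hx0 ↦ ?_, ?_⟩
  · obtain ⟨y, hy⟩ := SpecialLinear.exists_lieSpan_pair_eq_top h2 hx0
    have hsolv := hx y
    rw [hy] at hsolv
    exact SpecialLinear.not_isSolvable_sl2 h2 ((solvable_iff_equiv_solvable topEquiv).mp hsolv)
  · rintro rfl h
    exact isSolvable_lieSpan_pair_zero h
end

section
/- Let F be a field of characteristic 2 and L the 3-dimensional Lie algebra with basis a, b, c satisfying [a,b]=b, [a,c]=c, [b,c]=a. Then L is simple. -/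
/-! Write `a, b, c` for `B 0, B 1, B 2` and `x = α a + β b + γ c`. Since `ad a` kills `a` and fixes
`b` and `c`, the elements `x - ⁅a, x⁆`, `⁅b, ⁅a, x⁆⁆` and `⁅c, ⁅a, x⁆⁆` are `α a`, `γ a` and `-β a`.
So every nonzero ideal contains `a`, hence also `b = -⁅b, a⁆` and `c = -⁅c, a⁆`. -/

theorem LieSubmodule.eq_top_of_basis_mem {R L M ι : Type*} [CommRing R] [LieRing L]
    [LieAlgebra R L] [AddCommGroup M] [Module R M] [LieRingModule L M] [LieModule R L M]
    (B : Module.Basis ι R M) {N : LieSubmodule R L M} (hB : ∀ i, B i ∈ N) : N = ⊤ := by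
  rw [← LieSubmodule.toSubmodule_eq_top, eq_top_iff, ← B.span_eq, Submodule.span_le]
  rintro _ ⟨i, rfl⟩
  exact hB i

namespace LieAlgebra

variable {F L : Type*} [Field F] [LieRing L] [LieAlgebra F L] {B : Module.Basis (Fin 3) F L}
  (hab : ⁅B 0, B 1⁆ = B 1) (hac : ⁅B 0, B 2⁆ = B 2)
include hab hac

lemma sub_lie_basis_zero_eq (x : L) : x - ⁅B 0, x⁆ = B.repr x 0 • B 0 := by
  conv_lhs => rw [← B.sum_repr x]
  rw [Fin.sum_univ_three]
  simp [hab, hac]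

variable (hbc : ⁅B 1, B 2⁆ = B 0)
include hbc

lemma lie_basis_one_lie_basis_zero_eq (x : L) : ⁅B 1, ⁅B 0, x⁆⁆ = B.repr x 2 • B 0 := by
  conv_lhs => rw [← B.sum_repr x]
  rw [Fin.sum_univ_three]
  simp [hab, hac, hbc]

lemma lie_basis_two_lie_basis_zero_eq (x : L) : ⁅B 2, ⁅B 0, x⁆⁆ = -(B.repr x 1 • B 0) := by
  have hcb : ⁅B 2, B 1⁆ = -B 0 := by rw [← lie_skew, hbc]
  conv_lhs => rw [← B.sum_repr x]
  rw [Fin.sum_univ_three]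
  simp [hab, hac, hcb]

lemma repr_smul_basis_zero_mem {I : LieIdeal F L} {x : L} (hx : x ∈ I) (i : Fin 3) :
    B.repr x i • B 0 ∈ I := by
  have hax : ⁅B 0, x⁆ ∈ I := I.lie_mem hx
  fin_cases i
  · simpa [sub_lie_basis_zero_eq hab hac] using I.sub_mem hx hax
  · simpa [lie_basis_two_lie_basis_zero_eq hab hac hbc] using I.lie_mem (x := B 2) hax
  · simpa [lie_basis_one_lie_basis_zero_eq hab hac hbc] using I.lie_mem (x := B 1) hax

lemma basis_zero_mem_of_ne_bot {I : LieIdeal F L} (hI : I ≠ ⊥) : B 0 ∈ I := by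
  obtain ⟨x, hxI, hx0⟩ := (Submodule.ne_bot_iff I.toSubmodule).mp
    (by rwa [Ne, LieSubmodule.toSubmodule_eq_bot])
  obtain ⟨i, hi⟩ : ∃ i, B.repr x i ≠ 0 := by
    by_contra! h
    exact hx0 (B.ext_elem_iff.mpr (by simpa using h))
  simpa [smul_smul, inv_mul_cancel₀ hi] using
    I.smul_mem (B.repr x i)⁻¹ (repr_smul_basis_zero_mem hab hac hbc hxI i)

lemma lieIdeal_eq_top_of_ne_bot {I : LieIdeal F L} (hI : I ≠ ⊥) : I = ⊤ := by
  have ha : B 0 ∈ I := basis_zero_mem_of_ne_bot hab hac hbc hI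
  refine LieSubmodule.eq_top_of_basis_mem B fun i => ?_
  fin_cases i
  · exact ha
  · simpa [← lie_skew (B 1), hab] using I.lie_mem (x := B 1) ha
  · simpa [← lie_skew (B 2), hac] using I.lie_mem (x := B 2) ha

end LieAlgebra

theorem stmt5_general (F L : Type*) [Field F] [LieRing L] [LieAlgebra F L]
    (B : Module.Basis (Fin 3) F L)
    (hab : ⁅B 0, B 1⁆ = B 1) (hac : ⁅B 0, B 2⁆ = B 2) (hbc : ⁅B 1, B 2⁆ = B 0) :
    LieAlgebra.IsSimple F L := by
  refine ⟨fun I => or_iff_not_imp_left.mpr (LieAlgebra.lieIdeal_eq_top_of_ne_bot hab hac hbc), ?_⟩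
  intro _
  exact B.ne_zero 1 (by rw [← hab, trivial_lie_zero])

theorem stmt5 (F L : Type*) [Field F] [CharP F 2] [LieRing L] [LieAlgebra F L]
    (B : Module.Basis (Fin 3) F L)
    (hab : ⁅B 0, B 1⁆ = B 1) (hac : ⁅B 0, B 2⁆ = B 2) (hbc : ⁅B 1, B 2⁆ = B 0) :
    LieAlgebra.IsSimple F L :=
  stmt5_general F L B hab hac hbc
end

section
/- Let F be a field of characteristic 2 and L the 3-dimensional Lie algebra with basis a, b, c satisfying [a,b]=b, [a,c]=c, [b,c]=a. Then a ∈ sol(L): for every x ∈ L, the subalgebra generated by a and x is solvable; however sol(L) is not an ideal of L (indeed b, c ∉ sol(L) since ⟨b,c⟩ = L is not solvable). -/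
/-! For every `x`, `⁅a, x⁆ = x - r • a` lies in `span {a, x}`, so the subalgebra generated by `a`
and `x` is that span; every bracket in it is a multiple of `⁅a, x⁆`, hence its derived algebra is
abelian. On the other hand `⁅b, c⁆ = a`, so `b` and `c` generate `L`, which equals `⁅L, L⁆` and is
therefore not solvable. An ideal containing `a` contains `⁅a, b⁆ = b`. -/

open LieAlgebra

namespace LieAlgebra

variable {R L : Type*} [CommRing R] [LieRing L] [LieAlgebra R L]

theorem isSolvable_of_forall_lie_mem_span_singleton (w : L)
    (h : ∀ u v : L, ⁅u, v⁆ ∈ R ∙ w) : IsSolvable L := by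
  have hD : (derivedSeries R L 1 : Submodule R L) ≤ R ∙ w := by
    rw [coe_derivedSeries_one_eq, Submodule.span_le]
    rintro _ ⟨u, v, rfl⟩
    exact h u v
  refine IsSolvable.mk (R := R) (k := 2) ?_
  show derivedSeriesOfIdeal R L (1 + 1) ⊤ = ⊥
  rw [derivedSeriesOfIdeal_succ, LieSubmodule.lie_eq_bot_iff]
  intro u hu v hv
  obtain ⟨s, rfl⟩ := Submodule.mem_span_singleton.mp (hD hu)
  obtain ⟨t, rfl⟩ := Submodule.mem_span_singleton.mp (hD hv)
  simp

theorem not_isSolvable_of_derivedSeries_one_eq_top_s6 [Nontrivial L]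
    (h : derivedSeries R L 1 = ⊤) : ¬ IsSolvable L := fun _ ↦
  (derivedSeries_lt_top_of_solvable R L).ne h

end LieAlgebra

section

variable {R L : Type*} [CommRing R] [LieRing L] [LieAlgebra R L]

theorem lie_mem_span_singleton_lie_of_mem_span_pair {x y u v : L}
    (hu : u ∈ Submodule.span R {x, y}) (hv : v ∈ Submodule.span R {x, y}) :
    ⁅u, v⁆ ∈ R ∙ ⁅x, y⁆ := by
  obtain ⟨a, b, rfl⟩ := Submodule.mem_span_pair.mp hu
  obtain ⟨c, d, rfl⟩ := Submodule.mem_span_pair.mp hv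
  refine Submodule.mem_span_singleton.mpr ⟨a * d - b * c, ?_⟩
  simp only [lie_add, add_lie, lie_smul, smul_lie, lie_self, smul_zero]
  rw [← lie_skew x y]
  module

theorem isSolvable_lieSpan_pair {x y : L} (hxy : ⁅x, y⁆ ∈ Submodule.span R {x, y}) :
    IsSolvable (LieSubalgebra.lieSpan R L {x, y}) := by
  obtain ⟨K, hK⟩ : ∃ K : LieSubalgebra R L, K.toSubmodule = Submodule.span R {x, y} :=
    (Submodule.exists_lieSubalgebra_coe_eq_iff _).mpr fun u v hu hv ↦
      Submodule.span_singleton_le_iff_mem _ _ |>.mpr hxy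
        (lie_mem_span_singleton_lie_of_mem_span_pair hu hv)
  have hspan : ∀ u ∈ LieSubalgebra.lieSpan R L {x, y}, u ∈ Submodule.span R {x, y} := by
    intro u hu
    rw [← hK]
    refine LieSubalgebra.lieSpan_le.mpr ?_ hu
    rw [← LieSubalgebra.coe_toSubmodule, hK]
    exact Submodule.subset_span
  refine isSolvable_of_forall_lie_mem_span_singleton (R := R)
    ⟨⁅x, y⁆, LieSubalgebra.lie_mem _ (LieSubalgebra.subset_lieSpan (by simp))
      (LieSubalgebra.subset_lieSpan (by simp))⟩ fun u v ↦ ?_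
  obtain ⟨t, ht⟩ := Submodule.mem_span_singleton.mp
    (lie_mem_span_singleton_lie_of_mem_span_pair (hspan u u.2) (hspan v v.2))
  exact Submodule.mem_span_singleton.mpr ⟨t, Subtype.ext ht⟩

theorem notMem_solSet_of_lieSpan_eq_top {x y : L}
    (hxy : LieSubalgebra.lieSpan R L {x, y} = ⊤) (hL : ¬ IsSolvable L) : y ∉ solSet R L := by
  intro hy
  have := hy x
  rw [hxy] at this
  exact hL ((solvable_iff_equiv_solvable LieSubalgebra.topEquiv).mp this)

variable (B : Module.Basis (Fin 3) R L)

theorem lie_basis_zero_mem_span_pair (hab : ⁅B 0, B 1⁆ = B 1) (hac : ⁅B 0, B 2⁆ = B 2) (x : L) :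
    ⁅B 0, x⁆ ∈ Submodule.span R {B 0, x} := by
  obtain ⟨r, s, t, rfl⟩ : ∃ r s t : R, r • B 0 + s • B 1 + t • B 2 = x :=
    ⟨_, _, _, (Fin.sum_univ_three _).symm.trans (B.sum_repr x)⟩
  have hx : ⁅B 0, r • B 0 + s • B 1 + t • B 2⁆ = r • B 0 + s • B 1 + t • B 2 - r • B 0 := by
    simp only [lie_add, lie_smul, lie_self, smul_zero, hab, hac]
    abel
  rw [hx]
  exact sub_mem (Submodule.subset_span (by simp))
    (Submodule.smul_mem _ _ (Submodule.subset_span (by simp)))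

theorem basis_zero_mem_solSet (hab : ⁅B 0, B 1⁆ = B 1) (hac : ⁅B 0, B 2⁆ = B 2) :
    B 0 ∈ solSet R L := fun x ↦ by
  rw [Set.pair_comm]
  exact isSolvable_lieSpan_pair (lie_basis_zero_mem_span_pair B hab hac x)

theorem derivedSeries_one_eq_top_of_basis (hab : ⁅B 0, B 1⁆ = B 1) (hac : ⁅B 0, B 2⁆ = B 2)
    (hbc : ⁅B 1, B 2⁆ = B 0) : derivedSeries R L 1 = ⊤ := by
  have hmem (u v : L) : ⁅u, v⁆ ∈ derivedSeries R L 1 :=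
    LieSubmodule.lie_mem_lie (LieSubmodule.mem_top u) (LieSubmodule.mem_top v)
  rw [← LieSubmodule.toSubmodule_eq_top, Submodule.eq_top_iff_forall_basis_mem B]
  intro i
  fin_cases i
  · exact hbc ▸ hmem _ _
  · exact hab ▸ hmem _ _
  · exact hac ▸ hmem _ _

theorem lieSpan_basis_one_two_eq_top (hbc : ⁅B 1, B 2⁆ = B 0) :
    LieSubalgebra.lieSpan R L {B 1, B 2} = ⊤ := by
  have h1 : B 1 ∈ LieSubalgebra.lieSpan R L {B 1, B 2} := LieSubalgebra.subset_lieSpan (by simp)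
  have h2 : B 2 ∈ LieSubalgebra.lieSpan R L {B 1, B 2} := LieSubalgebra.subset_lieSpan (by simp)
  rw [← LieSubalgebra.toSubmodule_eq_top, Submodule.eq_top_iff_forall_basis_mem B]
  intro i
  fin_cases i
  · exact hbc ▸ LieSubalgebra.lie_mem _ h1 h2
  · exact h1
  · exact h2

end

theorem stmt6_general (F L : Type*) [Field F] [LieRing L] [LieAlgebra F L]
    (B : Module.Basis (Fin 3) F L)
    (hab : ⁅B 0, B 1⁆ = B 1) (hac : ⁅B 0, B 2⁆ = B 2) (hbc : ⁅B 1, B 2⁆ = B 0) :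
    B 0 ∈ solSet F L ∧ B 1 ∉ solSet F L ∧ B 2 ∉ solSet F L ∧
      ¬∃ I : LieIdeal F L, (I : Set L) = solSet F L := by
  have : Nontrivial L := ⟨B 0, 0, B.ne_zero 0⟩
  have hL : ¬ IsSolvable L :=
    not_isSolvable_of_derivedSeries_one_eq_top_s6 (derivedSeries_one_eq_top_of_basis B hab hac hbc)
  have h0 := basis_zero_mem_solSet B hab hac
  have h1 : B 1 ∉ solSet F L := notMem_solSet_of_lieSpan_eq_top
    (by rw [Set.pair_comm]; exact lieSpan_basis_one_two_eq_top B hbc) hL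
  have h2 : B 2 ∉ solSet F L := notMem_solSet_of_lieSpan_eq_top
    (lieSpan_basis_one_two_eq_top B hbc) hL
  refine ⟨h0, h1, h2, ?_⟩
  rintro ⟨I, hI⟩
  have hB0 : B 0 ∈ I := by rwa [← SetLike.mem_coe, hI]
  have hB1 : B 1 ∈ I := by
    simpa [← lie_skew (B 1), hab] using I.lie_mem (x := B 1) hB0
  exact h1 (hI ▸ hB1)

theorem stmt6 (F L : Type*) [Field F] [CharP F 2] [LieRing L] [LieAlgebra F L]
    (B : Module.Basis (Fin 3) F L)
    (hab : ⁅B 0, B 1⁆ = B 1) (hac : ⁅B 0, B 2⁆ = B 2) (hbc : ⁅B 1, B 2⁆ = B 0) :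
    B 0 ∈ solSet F L ∧ B 1 ∉ solSet F L ∧ B 2 ∉ solSet F L ∧
      ¬∃ I : LieIdeal F L, (I : Set L) = solSet F L :=
  stmt6_general F L B hab hac hbc
end

section
/- Let B₁,...,Bₙ be subspaces of a vector space V over a field F such that no Bᵢ is contained in the union of the other Bⱼ. If |F| > n−1, then the union B₁ ∪ ... ∪ Bₙ is not a subspace of V. -/
/-!
Pick `x` lying only in `B i₀` and `y` lying only in `B i₁`, with `i₀ ≠ i₁`. If the union were
a subspace, each of the `|F|` vectors `x + c • y` would lie in some `B j`; here `j ≠ i₁` because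
`x ∉ B i₁`, and two different scalars cannot share the same `j`, since then `y ∈ B j`.
This gives an injection from `F` into the `n - 1` indices other than `i₁`.
-/

namespace Submodule

variable {F V : Type*} [Field F] [AddCommGroup V] [Module F V]

theorem mem_of_add_smul_mem_of_add_smul_mem {S : Submodule F V} {x y : V} {c c' : F}
    (hcc' : c ≠ c') (hc : x + c • y ∈ S) (hc' : x + c' • y ∈ S) : y ∈ S := by
  have hdiff : (c - c') • y ∈ S := by
    simpa only [sub_smul, add_sub_add_left_eq_sub] using S.sub_mem hc hc'
  simpa only [smul_smul, inv_mul_cancel₀ (sub_ne_zero.mpr hcc'), one_smul]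
    using S.smul_mem (c - c')⁻¹ hdiff

theorem exists_injective_of_coe_eq_iUnion {ι : Type*} {B : ι → Submodule F V}
    {W : Submodule F V} (hW : (W : Set V) = ⋃ i, (B i : Set V)) {i₁ : ι} {x y : V} (hxW : x ∈ W)
    (hx : x ∉ B i₁) (hy : y ∈ B i₁) (hy' : ∀ j ≠ i₁, y ∉ B j) :
    ∃ f : F → {j // j ≠ i₁}, Function.Injective f := by
  have hyW : y ∈ W := by
    rw [← SetLike.mem_coe, hW]
    exact Set.mem_iUnion_of_mem i₁ hy
  have hline : ∀ c : F, ∃ j, j ≠ i₁ ∧ x + c • y ∈ B j := by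
    intro c
    have hmem : x + c • y ∈ (W : Set V) := W.add_mem hxW (W.smul_mem c hyW)
    rw [hW, Set.mem_iUnion] at hmem
    obtain ⟨j, hj⟩ := hmem
    refine ⟨j, ?_, hj⟩
    rintro rfl
    exact hx (((B j).add_mem_iff_left ((B j).smul_mem c hy)).mp hj)
  choose f hf hfmem using hline
  refine ⟨fun c => ⟨f c, hf c⟩, fun c c' hcc' => ?_⟩
  by_contra hne
  have hfc : f c = f c' := congrArg Subtype.val hcc'
  exact hy' (f c') (hf c')
    (mem_of_add_smul_mem_of_add_smul_mem hne (hfc ▸ hfmem c) (hfmem c'))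

end Submodule

theorem Set.exists_mem_forall_notMem_of_not_subset {ι V : Type*} {B : ι → Set V} {i : ι}
    (h : ¬ (B i ⊆ ⋃ j ∈ {j : ι | j ≠ i}, B j)) :
    ∃ x ∈ B i, ∀ j ≠ i, x ∉ B j := by
  simpa only [Set.not_subset, Set.mem_iUnion, Set.mem_ofPred_eq, not_exists, not_and, exists_prop]
    using h

theorem stmt7 (F V : Type*) [Field F] [AddCommGroup V] [Module F V] (n : ℕ) (hn : 2 ≤ n)
    (B : Fin n → Submodule F V)
    (hB : ∀ i, ¬ ((B i : Set V) ⊆ ⋃ j ∈ {j : Fin n | j ≠ i}, (B j : Set V)))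
    (hF : ((n - 1 : ℕ) : Cardinal) < Cardinal.mk F) :
    ¬∃ W : Submodule F V, (W : Set V) = ⋃ i, (B i : Set V) := by
  rintro ⟨W, hW⟩
  have : Nontrivial (Fin n) := Fin.nontrivial_iff_two_le.mpr hn
  obtain ⟨i₀, i₁, hne⟩ := exists_pair_ne (Fin n)
  obtain ⟨x, hx, hx'⟩ :=
    Set.exists_mem_forall_notMem_of_not_subset (B := fun j => (B j : Set V)) (hB i₀)
  obtain ⟨y, hy, hy'⟩ :=
    Set.exists_mem_forall_notMem_of_not_subset (B := fun j => (B j : Set V)) (hB i₁)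
  have hxW : x ∈ W := by
    rw [← SetLike.mem_coe, hW]
    exact Set.mem_iUnion_of_mem i₀ hx
  obtain ⟨f, hf⟩ :=
    Submodule.exists_injective_of_coe_eq_iUnion hW hxW (hx' i₁ hne.symm) hy hy'
  have hle := Cardinal.lift_mk_le_lift_mk_of_injective hf
  have hcard : Cardinal.mk {j : Fin n // j ≠ i₁} = (n - 1 : ℕ) := by
    simp [Cardinal.mk_fintype, Fintype.card_subtype_compl]
  rw [hcard, Cardinal.lift_natCast, Cardinal.lift_id'] at hle
  exact hle.not_gt hF
end

section
/- For any x in a Lie algebra L, sol_L(x) equals the union of all maximal solvable subalgebras of L that contain x. -/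
namespace LieSubalgebra

variable {R L : Type*} [CommRing R] [LieRing L] [LieAlgebra R L]

theorem isSolvable_of_le {K M : LieSubalgebra R L} (hKM : K ≤ M) [LieAlgebra.IsSolvable M] :
    LieAlgebra.IsSolvable K :=
  (inclusion_injective hKM).lieAlgebra_isSolvable

theorem lieSpan_pair_le_iff {x y : L} {K : LieSubalgebra R L} :
    lieSpan R L {x, y} ≤ K ↔ x ∈ K ∧ y ∈ K := by
  simp [lieSpan_le, Set.insert_subset_iff]

end LieSubalgebra

section Solvabilizer

open LieSubalgebra

variable {R L : Type*} [CommRing R] [LieRing L] [LieAlgebra R L] {x y : L}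

theorem mem_solvabilizer_iff :
    y ∈ solvabilizer R x ↔
      ∃ K : LieSubalgebra R L, LieAlgebra.IsSolvable K ∧ x ∈ K ∧ y ∈ K := by
  refine ⟨fun h ↦ ⟨_, h, lieSpan_pair_le_iff.mp le_rfl⟩, ?_⟩
  rintro ⟨K, hK, hxK, hyK⟩
  exact isSolvable_of_le (lieSpan_pair_le_iff.mpr ⟨hxK, hyK⟩)

theorem mem_solvabilizer_iff_exists_maximal [WellFoundedGT (LieSubalgebra R L)] :
    y ∈ solvabilizer R x ↔ ∃ M : LieSubalgebra R L,
      Maximal (fun N : LieSubalgebra R L ↦ LieAlgebra.IsSolvable N) M ∧ x ∈ M ∧ y ∈ M := by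
  rw [mem_solvabilizer_iff]
  refine ⟨?_, fun ⟨M, hM, hxy⟩ ↦ ⟨M, hM.prop, hxy⟩⟩
  rintro ⟨K, hK, hxK, hyK⟩
  obtain ⟨M, hKM, hM⟩ :=
    exists_maximal_ge_of_wellFoundedGT (fun N : LieSubalgebra R L ↦ LieAlgebra.IsSolvable N) K hK
  exact ⟨M, hM, hKM hxK, hKM hyK⟩

end Solvabilizer

theorem stmt8 (F L : Type*) [Field F] [LieRing L] [LieAlgebra F L] [FiniteDimensional F L]
    (x : L) :
    solvabilizer F x =
      ⋃ M ∈ {M : LieSubalgebra F L |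
        Maximal (fun N : LieSubalgebra F L => LieAlgebra.IsSolvable N) M ∧ x ∈ M},
        (M : Set L) := by
  ext y
  simp only [mem_solvabilizer_iff_exists_maximal, Set.mem_iUnion, Set.mem_ofPred_eq,
    SetLike.mem_coe, exists_prop, and_assoc]
end

section
/- Let L be a finite-dimensional Lie algebra and N an ideal with N ⊆ sol(L) such that N is solvable. Then for any x ∈ L, the preimage of sol_{L/N}(x+N) under the projection π: L → L/N is exactly sol_L(x); equivalently sol_{L/N}(π(x)) = π(sol_L(x)). -/
/-!
The projection `π : L → L/N` is a Lie homomorphism with solvable kernel, and it maps the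
subalgebra `⟨x, y⟩` onto `⟨π x, π y⟩`. Homomorphic images of solvable algebras are solvable;
conversely, if `π S` is solvable then `S` is an extension of `π S` by the solvable `S ∩ N`,
hence solvable. So `π y ∈ sol(π x) ↔ y ∈ sol(x)`, and surjectivity of `π` gives the image form.
-/

open LieAlgebra

section

variable {R L L' : Type*} [CommRing R] [LieRing L] [LieAlgebra R L] [LieRing L'] [LieAlgebra R L']

def LieIdeal.toQuotient (I : LieIdeal R L) : L →ₗ⁅R⁆ L ⧸ I :=
  { (LieSubmodule.Quotient.mk' I : L →ₗ[R] L ⧸ I) with map_lie' := rfl }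

lemma LieIdeal.surjective_toQuotient (I : LieIdeal R L) : Function.Surjective I.toQuotient :=
  LieSubmodule.Quotient.surjective_mk' I

lemma LieIdeal.ker_toQuotient (I : LieIdeal R L) : I.toQuotient.ker = I := by
  ext
  exact LieSubmodule.Quotient.mk_eq_zero I

lemma LieHom.ker_rangeRestrict (f : L →ₗ⁅R⁆ L') : f.rangeRestrict.ker = f.ker := by
  ext
  simp [LieHom.mem_ker, LieHom.rangeRestrict_apply, Subtype.ext_iff]

lemma LieHom.range_comp_incl (f : L →ₗ⁅R⁆ L') (S : LieSubalgebra R L) :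
    (f.comp S.incl).range = S.map f := by
  ext
  simp

lemma LieHom.isSolvable_of_isSolvable_ker_of_isSolvable_range (f : L →ₗ⁅R⁆ L')
    [IsSolvable f.ker] [IsSolvable f.range] : IsSolvable L := by
  obtain ⟨k, hk⟩ := IsSolvable.solvable (R := R) (L := f.range)
  obtain ⟨l, hl⟩ := IsSolvable.solvable (R := R) (L := f.ker)
  have hle : derivedSeries R L k ≤ f.ker := by
    rw [← f.ker_rangeRestrict, ← LieIdeal.map_eq_bot_iff, ← le_bot_iff, ← hk]
    exact LieIdeal.derivedSeries_map_le k
  rw [LieIdeal.derivedSeries_eq_bot_iff] at hl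
  refine IsSolvable.mk (R := R) (k := l + k) (le_bot_iff.mp ?_)
  rw [derivedSeries_def, derivedSeriesOfIdeal_add, ← hl]
  exact derivedSeriesOfIdeal_mono hle l

lemma LieSubalgebra.isSolvable_map (f : L →ₗ⁅R⁆ L') {S : LieSubalgebra R L}
    [IsSolvable S] : IsSolvable (S.map f) :=
  f.range_comp_incl S ▸ (f.comp S.incl).isSolvable_range

lemma LieSubalgebra.isSolvable_of_isSolvable_map (f : L →ₗ⁅R⁆ L') [IsSolvable f.ker]
    {S : LieSubalgebra R L} (hS : IsSolvable (S.map f)) : IsSolvable S := by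
  let kerIncl : (f.comp S.incl).ker →ₗ⁅R⁆ f.ker :=
    { toFun := fun z ↦ ⟨z.1, z.2⟩
      map_add' := fun _ _ ↦ rfl
      map_smul' := fun _ _ ↦ rfl
      map_lie' := rfl }
  have : IsSolvable (f.comp S.incl).ker :=
    Function.Injective.lieAlgebra_isSolvable (f := kerIncl) fun _ _ h ↦
      Subtype.ext <| Subtype.ext <| congrArg (fun z : f.ker ↦ (z : L)) h
  have : IsSolvable (f.comp S.incl).range := f.range_comp_incl S ▸ hS
  exact (f.comp S.incl).isSolvable_of_isSolvable_ker_of_isSolvable_range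

lemma LieHom.preimage_solvabilizer (f : L →ₗ⁅R⁆ L') [IsSolvable f.ker] (x : L) :
    f ⁻¹' solvabilizer R (f x) = solvabilizer R x := by
  ext y
  have hspan : LieSubalgebra.lieSpan R L' {f x, f y} =
      (LieSubalgebra.lieSpan R L {x, y}).map f := by
    rw [LieSubalgebra.map_lieSpan, Set.image_pair]
  rw [Set.mem_preimage, solvabilizer, solvabilizer, Set.mem_ofPred, Set.mem_ofPred, hspan]
  exact ⟨LieSubalgebra.isSolvable_of_isSolvable_map f, fun _ ↦ LieSubalgebra.isSolvable_map f⟩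

lemma LieHom.solvabilizer_eq_image (f : L →ₗ⁅R⁆ L') [IsSolvable f.ker]
    (hf : Function.Surjective f) (x : L) :
    solvabilizer R (f x) = f '' solvabilizer R x := by
  rw [← f.preimage_solvabilizer, Set.image_preimage_eq _ hf]

end

theorem stmt11_general (F L : Type*) [Field F] [LieRing L] [LieAlgebra F L]
    (N : LieIdeal F L) (hNsolv : LieAlgebra.IsSolvable N) (x : L) :
    (LieSubmodule.Quotient.mk' N) ⁻¹'
        solvabilizer F ((LieSubmodule.Quotient.mk' N) x) = solvabilizer F x ∧
    solvabilizer F ((LieSubmodule.Quotient.mk' N) x) =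
      (LieSubmodule.Quotient.mk' N) '' solvabilizer F x := by
  have : IsSolvable N.toQuotient.ker := by rwa [N.ker_toQuotient]
  exact ⟨N.toQuotient.preimage_solvabilizer x,
    N.toQuotient.solvabilizer_eq_image N.surjective_toQuotient x⟩

theorem stmt11 (F L : Type*) [Field F] [LieRing L] [LieAlgebra F L] [FiniteDimensional F L]
    (N : LieIdeal F L) (hNsolv : LieAlgebra.IsSolvable N)
    (hNsub : (N : Set L) ⊆ solSet F L) (x : L) :
    (LieSubmodule.Quotient.mk' N) ⁻¹'
        solvabilizer F ((LieSubmodule.Quotient.mk' N) x) = solvabilizer F x ∧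
    solvabilizer F ((LieSubmodule.Quotient.mk' N) x) =
      (LieSubmodule.Quotient.mk' N) '' solvabilizer F x :=
  stmt11_general F L N hNsolv x
end

section
/- Let L be a Lie algebra over a field F with solvable radical R. Then sol(L/R) = sol(L)/R: an element x + R lies in sol(L/R) if and only if x ∈ sol(L). -/
/-!
A Lie algebra is solvable as soon as it has a solvable ideal with solvable quotient. For a
subalgebra `K` of `L` the kernel of `K → L/R` embeds in the radical `R`, so `K` is solvable iff its
image in `L/R` is. The quotient map is surjective and sends `lieSpan {h, x}` onto
`lieSpan {h + R, x + R}`, hence `x + R ∈ sol(L/R)` iff `x ∈ sol(L)`.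
-/

open LieAlgebra

section

variable {R L L' : Type*} [CommRing R] [LieRing L] [LieAlgebra R L] [LieRing L'] [LieAlgebra R L']

namespace LieHom

theorem ker_rangeRestrict_s18 (f : L →ₗ⁅R⁆ L') : f.rangeRestrict.ker = f.ker := by
  ext x
  rw [mem_ker, mem_ker, rangeRestrict_apply]
  exact Subtype.ext_iff

theorem isSolvable_of_isSolvable_ker_range (f : L →ₗ⁅R⁆ L') [IsSolvable f.ker]
    [IsSolvable f.range] : IsSolvable L := by
  obtain ⟨k, hk⟩ := IsSolvable.solvable R f.range
  obtain ⟨l, hl⟩ := IsSolvable.solvable R f.ker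
  rw [LieIdeal.derivedSeries_eq_bot_iff] at hl
  have hker : derivedSeries R L k ≤ f.ker := by
    rw [← ker_rangeRestrict_s18, ← LieIdeal.map_eq_bot_iff,
      LieIdeal.derivedSeries_map_eq k f.surjective_rangeRestrict, hk]
  refine IsSolvable.mk (R := R) (k := l + k) ?_
  rw [derivedSeries_def, derivedSeriesOfIdeal_add, ← derivedSeries_def, eq_bot_iff, ← hl]
  exact derivedSeriesOfIdeal_mono hker l

theorem isSolvable_ker_comp_of_injective {L'' : Type*} [LieRing L''] [LieAlgebra R L'']
    (f : L' →ₗ⁅R⁆ L'') (g : L →ₗ⁅R⁆ L') (hg : Function.Injective g) [IsSolvable f.ker] :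
    IsSolvable (f.comp g).ker :=
  let j : (f.comp g).ker →ₗ⁅R⁆ f.ker :=
    { toFun := fun x => ⟨g x, x.2⟩
      map_add' := fun x y => by ext; simp
      map_smul' := fun t x => by ext; simp
      map_lie' := by intro x y; ext; simp }
  Function.Injective.lieAlgebra_isSolvable (f := j) fun x y hxy =>
    Subtype.ext (hg (congrArg Subtype.val hxy))

end LieHom

theorem LieSubalgebra.isSolvable_map_iff (f : L →ₗ⁅R⁆ L') [IsSolvable f.ker]
    (K : LieSubalgebra R L) : IsSolvable (K.map f) ↔ IsSolvable K := by
  have hrange : (f.comp K.incl).range = K.map f := by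
    ext; simp [LieHom.mem_range, LieSubalgebra.mem_map]
  rw [← hrange]
  constructor
  · intro
    have := f.isSolvable_ker_comp_of_injective K.incl Subtype.val_injective
    exact (f.comp K.incl).isSolvable_of_isSolvable_ker_range
  · intro
    infer_instance

namespace LieHom

variable (f : L →ₗ⁅R⁆ L') (hf : Function.Surjective f) [IsSolvable f.ker]
include hf

theorem map_mem_solSet_iff (x : L) : f x ∈ solSet R L' ↔ x ∈ solSet R L := by
  simp only [solSet, Set.mem_ofPred_eq, hf.forall]
  refine forall_congr' fun h => ?_
  rw [← Set.image_pair, ← LieSubalgebra.map_lieSpan, LieSubalgebra.isSolvable_map_iff]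

theorem preimage_solSet : f ⁻¹' solSet R L' = solSet R L :=
  Set.ext (f.map_mem_solSet_iff hf)

theorem solSet_eq_image : solSet R L' = f '' solSet R L := by
  rw [← f.preimage_solSet hf, hf.image_preimage]

end LieHom

def LieIdeal.mkQ (I : LieIdeal R L) : L →ₗ⁅R⁆ L ⧸ I :=
  { LieSubmodule.Quotient.mk' I with map_lie' := rfl }

theorem LieIdeal.ker_mkQ (I : LieIdeal R L) : I.mkQ.ker = I := by
  ext x
  exact LieSubmodule.Quotient.mk_eq_zero I

end

theorem stmt18 (F L : Type*) [Field F] [LieRing L] [LieAlgebra F L] [FiniteDimensional F L] :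
    (∀ x : L,
      (LieSubmodule.Quotient.mk' (LieAlgebra.radical F L)) x ∈
          solSet F (L ⧸ LieAlgebra.radical F L) ↔ x ∈ solSet F L) ∧
    solSet F (L ⧸ LieAlgebra.radical F L) =
      (LieSubmodule.Quotient.mk' (LieAlgebra.radical F L)) '' solSet F L := by
  let π := (radical F L).mkQ
  have hπ : Function.Surjective π := LieSubmodule.Quotient.surjective_mk' _
  have : IsSolvable π.ker := by rw [LieIdeal.ker_mkQ]; infer_instance
  exact ⟨π.map_mem_solSet_iff hπ, π.solSet_eq_image hπ⟩
end
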